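/- Let X : ℝ → ℝ² be a smooth unit-speed curve with unit tangent T = X', unit normal N (the counter-clockwise rotation of T by π/2) and signed curvature κ defined by T' = κN. Assume κ(s) > 0 for all s, κ is not a constant function, and let a ≠ 0 and b ∈ ℝ. Then there exists a constant vector V ∈ ℝ² such that κ(s)² + b = a⟨N(s), V⟩ for all s (i.e., X is a translating soliton to the flow ∂X/∂t = (1/a)(κ² + b)N) if and only if κ satisfies the Euler–Lagrange equation of the elastic energy functional Θ_{2,λ}(γ) = ∫_γ (κ² + λ) with λ = −b, namely 2κ''(s) + κ(s)³ − λκ(s) = 0 for all s. -/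

import Mathlib

private lemma hasDerivAt_fst' {f : ℝ → ℝ × ℝ} {f' : ℝ × ℝ} {x : ℝ}
    (h : HasDerivAt f f' x) : HasDerivAt (fun t => (f t).1) f'.1 x := by
  exact ((ContinuousLinearMap.fst ℝ ℝ ℝ).hasFDerivAt.comp_hasDerivAt x h)

private lemma hasDerivAt_snd' {f : ℝ → ℝ × ℝ} {f' : ℝ × ℝ} {x : ℝ}
    (h : HasDerivAt f f' x) : HasDerivAt (fun t => (f t).2) f'.2 x := by
  exact ((ContinuousLinearMap.snd ℝ ℝ ℝ).hasFDerivAt.comp_hasDerivAt x h)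

/-- A smooth unit-speed plane curve with positive nonconstant curvature is a
translating soliton to the flow `∂X/∂t = (1/a)(κ² + b)N` if and only if its
curvature satisfies the Euler–Lagrange equation of the elastic energy
`Θ_{2,λ}(γ) = ∫_γ (κ² + λ)` with `λ = -b`, namely `2κ'' + κ³ - λκ = 0`. -/
theorem translating_soliton_iff_elastic
    (X : ℝ → ℝ × ℝ) (κ : ℝ → ℝ) (a b : ℝ)
    (hX : ContDiff ℝ (⊤ : ℕ∞) X) (hκsmooth : ContDiff ℝ (⊤ : ℕ∞) κ)
    (hunit : ∀ s : ℝ, (deriv X s).1 ^ 2 + (deriv X s).2 ^ 2 = 1)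
    (hfrenet : ∀ s : ℝ, deriv (deriv X) s = κ s • (-(deriv X s).2, (deriv X s).1))
    (hpos : ∀ s : ℝ, 0 < κ s)
    (hnonconst : ∃ s₁ s₂ : ℝ, κ s₁ ≠ κ s₂)
    (ha : a ≠ 0) :
    (∃ V : ℝ × ℝ, ∀ s : ℝ,
        κ s ^ 2 + b = a * ((-(deriv X s).2) * V.1 + (deriv X s).1 * V.2)) ↔
      (∀ s : ℝ, 2 * deriv (deriv κ) s + κ s ^ 3 - (-b) * κ s = 0) := by
  have hX' : ContDiff ℝ (⊤ : ℕ∞) X := hX.of_le (by simp)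
  have hκ'' : ContDiff ℝ (⊤ : ℕ∞) κ := hκsmooth.of_le (by simp)
  have hT : ContDiff ℝ (⊤ : ℕ∞) (deriv X) := (contDiff_infty_iff_deriv.mp hX').2
  have hTd : Differentiable ℝ (deriv X) := hT.differentiable (by simp)
  have hκd : Differentiable ℝ κ := hκ''.differentiable (by simp)
  have hκ' : ContDiff ℝ (⊤ : ℕ∞) (deriv κ) := (contDiff_infty_iff_deriv.mp hκ'').2
  have hκ'd : Differentiable ℝ (deriv κ) := hκ'.differentiable (by simp)
  -- derivatives of tangent components
  have hT1 : ∀ s : ℝ, HasDerivAt (fun t => (deriv X t).1) (-(κ s * (deriv X s).2)) s := by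
    intro s
    have h := hasDerivAt_fst' ((hTd s).hasDerivAt)
    rw [hfrenet s] at h
    simpa [smul_eq_mul, mul_comm] using h
  have hT2 : ∀ s : ℝ, HasDerivAt (fun t => (deriv X t).2) (κ s * (deriv X s).1) s := by
    intro s
    have h := hasDerivAt_snd' ((hTd s).hasDerivAt)
    rw [hfrenet s] at h
    simpa [smul_eq_mul] using h
  constructor
  · rintro ⟨V, hV⟩ s
    -- step 1: 2 κ κ' = -(a κ (T·V))
    have step1 : ∀ t : ℝ, 2 * deriv κ t =
        -(a * ((deriv X t).1 * V.1 + (deriv X t).2 * V.2)) := by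
      intro t
      have d1 : HasDerivAt (fun u => κ u ^ 2 + b) (2 * κ t * deriv κ t) t := by
        have := ((hκd t).hasDerivAt.pow 2).add_const b
        exact this.congr_deriv (by norm_num)
      have d2 : HasDerivAt (fun u => a * ((-(deriv X u).2) * V.1 + (deriv X u).1 * V.2))
          (a * ((-(κ t * (deriv X t).1)) * V.1 + (-(κ t * (deriv X t).2)) * V.2)) t := by
        exact (((hT2 t).neg.mul_const V.1).add ((hT1 t).mul_const V.2)).const_mul a
      have heq : (fun u => κ u ^ 2 + b)
          = fun u => a * ((-(deriv X u).2) * V.1 + (deriv X u).1 * V.2) := funext hV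
      rw [heq] at d1
      have key := d1.unique d2
      have hκt := (hpos t).ne'
      have : κ t * (2 * deriv κ t)
          = κ t * (-(a * ((deriv X t).1 * V.1 + (deriv X t).2 * V.2))) := by
        linear_combination key
      exact mul_left_cancel₀ hκt this
    -- step 2: differentiate step1
    have d3 : HasDerivAt (fun u => 2 * deriv κ u) (2 * deriv (deriv κ) s) s :=
      ((hκ'd s).hasDerivAt).const_mul 2
    have d4 : HasDerivAt (fun u => -(a * ((deriv X u).1 * V.1 + (deriv X u).2 * V.2)))
        (-(a * ((-(κ s * (deriv X s).2)) * V.1 + (κ s * (deriv X s).1) * V.2))) s :=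
      ((((hT1 s).mul_const V.1).add ((hT2 s).mul_const V.2)).const_mul a).neg
    have heq2 : (fun u => 2 * deriv κ u)
        = fun u => -(a * ((deriv X u).1 * V.1 + (deriv X u).2 * V.2)) := funext step1
    rw [heq2] at d3
    have key2 := d3.unique d4
    have hVs := hV s
    -- key2 : 2 κ'' = -κ * (a * ((-T₂)V₁ + T₁V₂)) = -κ (κ²+b)
    have : 2 * deriv (deriv κ) s
        = -(κ s * (a * ((-(deriv X s).2) * V.1 + (deriv X s).1 * V.2))) := by
      rw [key2]; ring
    rw [← hVs] at this
    linear_combination this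
  · intro hEL
    set f : ℝ → ℝ := fun s => (κ s ^ 2 + b) * (-(deriv X s).2) - 2 * deriv κ s * (deriv X s).1
      with hf
    set g : ℝ → ℝ := fun s => (κ s ^ 2 + b) * (deriv X s).1 - 2 * deriv κ s * (deriv X s).2
      with hg
    have hfd : ∀ s : ℝ, HasDerivAt f 0 s := by
      intro s
      have d : HasDerivAt f
          ((2 * κ s * deriv κ s) * (-(deriv X s).2)
            + (κ s ^ 2 + b) * (-(κ s * (deriv X s).1))
            - ((2 * deriv (deriv κ) s) * (deriv X s).1
              + 2 * deriv κ s * (-(κ s * (deriv X s).2)))) s := by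
        have dκ2 : HasDerivAt (fun u => κ u ^ 2 + b) (2 * κ s * deriv κ s) s := by
          have := ((hκd s).hasDerivAt.pow 2).add_const b
          exact this.congr_deriv (by norm_num)
        have dκ' : HasDerivAt (fun u => 2 * deriv κ u) (2 * deriv (deriv κ) s) s :=
          ((hκ'd s).hasDerivAt).const_mul 2
        exact ((dκ2.mul (hT2 s).neg)).sub (dκ'.mul (hT1 s))
      have hz : (2 * κ s * deriv κ s) * (-(deriv X s).2)
            + (κ s ^ 2 + b) * (-(κ s * (deriv X s).1))
            - ((2 * deriv (deriv κ) s) * (deriv X s).1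
              + 2 * deriv κ s * (-(κ s * (deriv X s).2))) = 0 := by
        linear_combination (-(deriv X s).1) * hEL s
      rwa [hz] at d
    have hgd : ∀ s : ℝ, HasDerivAt g 0 s := by
      intro s
      have d : HasDerivAt g
          ((2 * κ s * deriv κ s) * (deriv X s).1
            + (κ s ^ 2 + b) * (-(κ s * (deriv X s).2))
            - ((2 * deriv (deriv κ) s) * (deriv X s).2
              + 2 * deriv κ s * (κ s * (deriv X s).1))) s := by
        have dκ2 : HasDerivAt (fun u => κ u ^ 2 + b) (2 * κ s * deriv κ s) s := by
          have := ((hκd s).hasDerivAt.pow 2).add_const b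
          exact this.congr_deriv (by norm_num)
        have dκ' : HasDerivAt (fun u => 2 * deriv κ u) (2 * deriv (deriv κ) s) s :=
          ((hκ'd s).hasDerivAt).const_mul 2
        exact ((dκ2.mul (hT1 s))).sub (dκ'.mul (hT2 s))
      have hz : (2 * κ s * deriv κ s) * (deriv X s).1
            + (κ s ^ 2 + b) * (-(κ s * (deriv X s).2))
            - ((2 * deriv (deriv κ) s) * (deriv X s).2
              + 2 * deriv κ s * (κ s * (deriv X s).1)) = 0 := by
        linear_combination (-(deriv X s).2) * hEL s
      rwa [hz] at d
    have hfc : ∀ s : ℝ, f s = f 0 :=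
      fun s => is_const_of_deriv_eq_zero (fun t => (hfd t).differentiableAt)
        (fun t => (hfd t).deriv) s 0
    have hgc : ∀ s : ℝ, g s = g 0 :=
      fun s => is_const_of_deriv_eq_zero (fun t => (hgd t).differentiableAt)
        (fun t => (hgd t).deriv) s 0
    refine ⟨(f 0 / a, g 0 / a), fun s => ?_⟩
    have hu := hunit s
    rw [← hfc s, ← hgc s]
    simp only [hf, hg]
    field_simp
    linear_combination (-(κ s ^ 2 + b)) * hu
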